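/- Let h(x,y) = A(1 - e^{ax})(1 - e^{by}) with A > 0 and a, b < 0. Then H(x,y) = h_xx + h_yy is not a constant function on ℝ₊². -/

import Mathlib

open Set

/-- Isotropic mean curvature of the Monge surface z = h(x,y). -/
noncomputable def isoMean (h : ℝ → ℝ → ℝ) (x y : ℝ) : ℝ :=
  deriv (deriv (fun x' => h x' y)) x + deriv (deriv (fun y' => h x y')) y

/-!
Writing `u = exp (a x)` and `v = exp (b y)`, the curvature is
`H = -A a² u - A b² v + A (a² + b²) u v`. The mixed second difference of `H` over the
rectangle `{1, 2}²` kills the first two terms and leaves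
`A (a² + b²) (u₁ - u₂) (v₁ - v₂)`, which is nonzero; for a constant `H` it would vanish.
-/

theorem isoMean_mul (f g : ℝ → ℝ) (x y : ℝ) :
    isoMean (fun x y => f x * g y) x y = deriv (deriv f) x * g y + f x * deriv (deriv g) y := by
  simp only [isoMean, deriv_mul_const_field', deriv_const_mul_field']

theorem deriv_one_sub_exp_mul (k : ℝ) :
    deriv (fun s => 1 - Real.exp (k * s)) = fun s => -(k * Real.exp (k * s)) := by
  funext s
  rw [(((hasDerivAt_id' s).const_mul k).exp.const_sub 1).deriv]
  ring

theorem deriv_deriv_one_sub_exp_mul (k t : ℝ) :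
    deriv (deriv (fun s => 1 - Real.exp (k * s))) t = -(k ^ 2 * Real.exp (k * t)) := by
  rw [deriv_one_sub_exp_mul, (((hasDerivAt_id' t).const_mul k).exp.const_mul k).fun_neg.deriv]
  ring

theorem isoMean_const_mul_one_sub_exp_mul (A a b x y : ℝ) :
    isoMean (fun x y => A * (1 - Real.exp (a * x)) * (1 - Real.exp (b * y))) x y
      = -A * a ^ 2 * Real.exp (a * x) - A * b ^ 2 * Real.exp (b * y)
        + A * (a ^ 2 + b ^ 2) * Real.exp (a * x) * Real.exp (b * y) := by
  simp only [isoMean_mul (fun x => A * (1 - Real.exp (a * x))) (fun y => 1 - Real.exp (b * y)),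
    deriv_const_mul_field', deriv_deriv_one_sub_exp_mul]
  ring

theorem exp_mul_sub_exp_mul_ne_zero {k s t : ℝ} (hk : k ≠ 0) (hst : s ≠ t) :
    Real.exp (k * s) - Real.exp (k * t) ≠ 0 :=
  sub_ne_zero.mpr (Real.exp_injective.ne (mul_right_injective₀ hk |>.ne hst))

/-- the isotropic mean curvature of the Spillman–Mitscherlich
surface z = A(1-e^{ax})(1-e^{by}) is not constant on ℝ₊². -/
theorem stmt17 (A a b : ℝ) (hA : 0 < A) (ha : a < 0) (hb : b < 0) :
    ¬ ∃ c : ℝ, ∀ x y : ℝ, 0 < x → 0 < y →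
      isoMean (fun x y => A * (1 - Real.exp (a * x)) * (1 - Real.exp (b * y))) x y = c := by
  rintro ⟨c, hc⟩
  have h11 := hc 1 1 one_pos one_pos
  have h21 := hc 2 1 two_pos one_pos
  have h12 := hc 1 2 one_pos two_pos
  have h22 := hc 2 2 two_pos two_pos
  simp only [isoMean_const_mul_one_sub_exp_mul] at h11 h21 h12 h22
  have hmixed : A * (a ^ 2 + b ^ 2) * (Real.exp (a * 1) - Real.exp (a * 2))
      * (Real.exp (b * 1) - Real.exp (b * 2)) = 0 := by
    linear_combination h11 - h21 - h12 + h22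
  have hab : a ^ 2 + b ^ 2 ≠ 0 :=
    (add_pos_of_pos_of_nonneg (sq_pos_of_ne_zero ha.ne) (sq_nonneg b)).ne'
  have hne : (1 : ℝ) ≠ 2 := by norm_num
  exact mul_ne_zero (mul_ne_zero (mul_ne_zero hA.ne' hab) (exp_mul_sub_exp_mul_ne_zero ha.ne hne))
    (exp_mul_sub_exp_mul_ne_zero hb.ne hne) hmixed
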